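/- arXiv:2101.00410 — 3 statements merged into one kernel-verified Lean document; each statement's English description precedes it below -/
import Mathlib

section
/- Let L be a complete enriched Lie algebra with defining ideals I_α and quotient maps ρ_α : L → L/I_α. If S and T are closed subspaces of L, then S + T is closed, i.e. the closure of S+T in L equals S+T. -/
section EnrichedPre

variable {L : Type*} [LieRing L] [LieAlgebra ℚ L]

/-- `lcsIn A n` is the span of iterated Lie brackets of length `n+1` with entries in `A`
(so `lcsIn ⊤ (k-1)` is the `k`-th term `L^k` of the lower central series). -/
def lcsIn (A : Submodule ℚ L) : ℕ → Submodule ℚ L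
  | 0 => A
  | n + 1 => Submodule.span ℚ {z : L | ∃ x ∈ A, ∃ y ∈ lcsIn A n, ⁅x, y⁆ = z}

/-- The closure of a subspace `S` in an enriched Lie algebra `(L, {I α})`:
the set of limits of coherent families of elements of `S`, i.e. of those `x`
whose image in each `L ⧸ I α` lies in the image of `S`. -/
def encl {ι : Type*} (I : ι → LieIdeal ℚ L) (S : Submodule ℚ L) : Submodule ℚ L where
  carrier := {x : L | ∀ α, ∃ s ∈ S, x - s ∈ (I α : Submodule ℚ L)}
  add_mem' := by
    intro a b ha hb α
    obtain ⟨s, hs, h1⟩ := ha α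
    obtain ⟨t, ht, h2⟩ := hb α
    exact ⟨s + t, S.add_mem hs ht, by
      simpa [add_sub_add_comm] using Submodule.add_mem _ h1 h2⟩
  zero_mem' := fun α => ⟨0, S.zero_mem, by simp⟩
  smul_mem' := by
    intro c a ha α
    obtain ⟨s, hs, h1⟩ := ha α
    exact ⟨c • s, S.smul_mem c hs, by
      simpa [smul_sub] using Submodule.smul_mem _ c h1⟩

/-- `(L, {I α})` is an enriched Lie algebra: a directed family of ideals with
finite-dimensional nilpotent quotients and trivial intersection. -/
def IsEnriched {ι : Type*} (I : ι → LieIdeal ℚ L) : Prop :=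
  (∀ α β, ∃ γ, I γ ≤ I α ⊓ I β) ∧
  (∀ α, FiniteDimensional ℚ (L ⧸ I α)) ∧
  (∀ α, LieRing.IsNilpotent (L ⧸ I α)) ∧
  (⨅ α, I α) = ⊥

/-- Completeness of `(L, {I α})`: every coherent family in `lim_α L/I α`
(presented by compatible representatives) has a limit in `L`. -/
def IsCompleteWrt {ι : Type*} (I : ι → LieIdeal ℚ L) : Prop :=
  ∀ y : ι → L, (∀ α β, I β ≤ I α → y β - y α ∈ (I α : Submodule ℚ L)) →
    ∃ x : L, ∀ α, x - y α ∈ (I α : Submodule ℚ L)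

end EnrichedPre

/-! If `x` lies in the closure of `S + T`, the sets `C α = {z ∈ S + I α | x - z ∈ T + I α}` are
nonempty cosets of subspaces containing `I α`, decreasing as `I α` shrinks. A coherent choice
`y α ∈ C α` has a limit `x'` by completeness, and closedness of `S` and `T` gives `x' ∈ S` and
`x - x' ∈ T`.

A coherent choice exists because cosets with finite-dimensional (Artinian) quotients are
linearly compact. By Zorn's lemma there is a minimal system of cosets inside `(C α)`. The
descending chain condition in `L ⧸ I α` yields a point `z₀` lifting to every deeper level, and
cutting the system down to the coset of `z₀` modulo `I α` gives a smaller system; so in a minimal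
system each member lies in a single coset of `I α`. -/

open Pointwise

section Cosets

variable {R V : Type*} [Ring R] [AddCommGroup V] [Module R V]

def IsCosetAbove (J : Submodule R V) (F : Set V) : Prop :=
  ∃ v, ∃ W : Submodule R V, J ≤ W ∧ F = {z | z - v ∈ W}

theorem setOf_sub_mem_subset_iff {v u : V} {W W' : Submodule R V} :
    {z | z - v ∈ W} ⊆ {z | z - u ∈ W'} ↔ v - u ∈ W' ∧ W ≤ W' := by
  refine ⟨fun h => ⟨h (by simp), fun w hw => ?_⟩, fun ⟨hvu, hWW'⟩ z hz => ?_⟩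
  · have hvw : v + w - u ∈ W' := h (by simpa using hw)
    simpa using W'.sub_mem hvw (h (by simp) : v - u ∈ W')
  · simpa using W'.add_mem (hWW' hz) hvu

namespace IsCosetAbove

variable {J J' : Submodule R V} {F G : Set V}

theorem nonempty (h : IsCosetAbove J F) : F.Nonempty := by
  obtain ⟨v, W, -, rfl⟩ := h
  exact ⟨v, by simp⟩

theorem inter (hF : IsCosetAbove J F) (hG : IsCosetAbove J G) (hFG : (F ∩ G).Nonempty) :
    IsCosetAbove J (F ∩ G) := by
  obtain ⟨v, W, hJW, rfl⟩ := hF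
  obtain ⟨u, W', hJW', rfl⟩ := hG
  obtain ⟨p, hpv, hpu⟩ := hFG
  refine ⟨p, W ⊓ W', le_inf hJW hJW', Set.ext fun z => ⟨fun ⟨hzv, hzu⟩ => ?_, fun hzp => ?_⟩⟩
  · exact ⟨by simpa using W.sub_mem hzv hpv, by simpa using W'.sub_mem hzu hpu⟩
  · exact ⟨by simpa using W.add_mem hzp.1 hpv, by simpa using W'.add_mem hzp.2 hpu⟩

theorem add_submodule (h : IsCosetAbove J' F) : IsCosetAbove J (F + J) := by
  obtain ⟨v, W, -, rfl⟩ := h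
  refine ⟨v, W ⊔ J, le_sup_right, Set.ext fun z => ⟨?_, fun hz => ?_⟩⟩
  · rintro ⟨w, hw, j, hj, rfl⟩
    simpa [add_sub_right_comm] using
      Submodule.add_mem_sup (hw : w - v ∈ W) (SetLike.mem_coe.mp hj)
  · obtain ⟨w, hw, j, hj, hwj⟩ := Submodule.mem_sup.mp hz
    exact ⟨v + w, by simpa using hw, j, hj, by simp only [add_assoc, hwj]; abel⟩

theorem exists_least [IsArtinian R (V ⧸ J)] {κ : Type*} [Nonempty κ] {F : κ → Set V}
    (hF : ∀ k, IsCosetAbove J (F k)) (hdir : Directed (· ⊇ ·) F) : ∃ k₀, ∀ k, F k₀ ⊆ F k := by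
  choose v W hJW hFW using hF
  obtain ⟨-, ⟨k₀, rfl⟩, hmin⟩ := (wellFounded_lt (α := Submodule R (V ⧸ J))).has_min
    (Set.range fun k => (W k).map J.mkQ) (Set.range_nonempty _)
  refine ⟨k₀, fun k => ?_⟩
  obtain ⟨j, hk₀j, hkj⟩ := hdir k₀ k
  change F j ⊆ F k₀ at hk₀j
  rw [hFW, hFW, setOf_sub_mem_subset_iff] at hk₀j
  have hW : W j = W k₀ := by
    have hmap : (W j).map J.mkQ = (W k₀).map J.mkQ :=
      eq_of_le_of_not_lt (Submodule.map_mono hk₀j.2) (hmin _ ⟨j, rfl⟩)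
    simpa [Submodule.comap_map_mkQ, hJW] using congr_arg (Submodule.comap J.mkQ) hmap
  refine subset_trans ?_ hkj
  rw [hFW, hFW, setOf_sub_mem_subset_iff, hW]
  exact ⟨by simpa using (W k₀).neg_mem hk₀j.1, le_rfl⟩

end IsCosetAbove

end Cosets

section CosetSystems

variable {R V ι : Type*} [Ring R] [AddCommGroup V] [Module R V] {J : ι → Submodule R V}

def IsCosetSystem (J : ι → Submodule R V) (F : ι → Set V) : Prop :=
  (∀ α, IsCosetAbove (J α) (F α)) ∧ ∀ ⦃α β⦄, J β ≤ J α → F β ⊆ F α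

theorem isCosetSystem_sup_inter_setOf_sub_mem {S T : Submodule R V} {x : V}
    (hx : ∀ α, x ∈ S ⊔ T ⊔ J α) :
    IsCosetSystem J fun α => ((S ⊔ J α : Submodule R V) : Set V) ∩ {z | z - x ∈ T ⊔ J α} := by
  refine ⟨fun α => ?_, fun α β h => Set.inter_subset_inter (sup_le_sup_left h S)
    fun z hz => sup_le_sup_left h T hz⟩
  refine IsCosetAbove.inter ⟨0, S ⊔ J α, le_sup_right, by simp⟩ ⟨x, T ⊔ J α, le_sup_right, rfl⟩ ?_
  obtain ⟨s, hs, t, ht, rfl⟩ := Submodule.mem_sup.mp (by simpa [sup_right_comm] using hx α :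
    x ∈ (S ⊔ J α) ⊔ T)
  exact ⟨s, hs, by simpa using Submodule.mem_sup_left (T.neg_mem ht)⟩

variable [∀ α, IsArtinian R (V ⧸ J α)]

theorem IsCosetSystem.iInter_of_isChain {c : Set (ι → Set V)}
    (hc : ∀ F ∈ c, IsCosetSystem J F) (hchain : IsChain (· ≤ ·) c) (hne : c.Nonempty) :
    IsCosetSystem J fun α => ⋂ F ∈ c, F α := by
  have : Nonempty c := hne.to_subtype
  refine ⟨fun α => ?_, fun α β h => Set.iInter₂_mono fun F hF => (hc F hF).2 h⟩
  have hdir : Directed (· ⊇ ·) fun F : c => F.1 α := fun F G =>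
    (hchain.total F.2 G.2).elim (fun h => ⟨F, subset_rfl, h α⟩) fun h => ⟨G, h α, subset_rfl⟩
  obtain ⟨⟨F₀, hF₀⟩, hleast⟩ := IsCosetAbove.exists_least (fun F : c => (hc F F.2).1 α) hdir
  have hF₀_eq : ⋂ F ∈ c, F α = F₀ α := subset_antisymm (Set.biInter_subset_of_mem hF₀)
    (Set.subset_iInter₂ fun F hF => hleast ⟨F, hF⟩)
  simpa only [hF₀_eq] using (hc F₀ hF₀).1 α

theorem IsCosetSystem.exists_forall_sub_mem_of_minimal (hdir : Directed (· ≥ ·) J)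
    {F : ι → Set V} (hF : Minimal (IsCosetSystem J) F) (α : ι) :
    ∃ z₀, ∀ z ∈ F α, z - z₀ ∈ J α := by
  have : Nonempty {γ // J γ ≤ J α} := ⟨⟨α, le_rfl⟩⟩
  have hdir' : Directed (· ⊇ ·) fun γ : {γ // J γ ≤ J α} => F γ + J α := fun γ δ => by
    obtain ⟨ε, hεγ, hεδ⟩ := hdir γ δ
    exact ⟨⟨ε, hεγ.trans γ.2⟩, Set.add_subset_add_right (hF.1.2 hεγ),
      Set.add_subset_add_right (hF.1.2 hεδ)⟩
  obtain ⟨γ₀, hγ₀⟩ := IsCosetAbove.exists_least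
    (fun γ : {γ // J γ ≤ J α} => (hF.1.1 γ.1).add_submodule) hdir'
  obtain ⟨z₀, hz₀⟩ := (hF.1.1 γ₀).add_submodule.nonempty
  have hlift : ∀ γ, J γ ≤ J α → ∃ w ∈ F γ, w - z₀ ∈ J α := fun γ hγ => by
    obtain ⟨w, hw, j, hj, rfl⟩ := hγ₀ ⟨γ, hγ⟩ hz₀
    exact ⟨w, hw, by simpa using (J α).neg_mem hj⟩
  set N : ι → Set V := fun γ => F γ ∩ {u | u - z₀ ∈ J α ⊔ J γ}
  have hN : IsCosetSystem J N := by
    refine ⟨fun γ => (hF.1.1 γ).inter ⟨z₀, _, le_sup_right, rfl⟩ ?_,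
      fun γ δ h => Set.inter_subset_inter (hF.1.2 h) fun u hu => sup_le_sup_left h _ hu⟩
    obtain ⟨δ, hδγ, hδα⟩ := hdir γ α
    obtain ⟨w, hw, hwz⟩ := hlift δ hδα
    exact ⟨w, hF.1.2 hδγ hw, Submodule.mem_sup_left hwz⟩
  exact ⟨z₀, fun z hz => by simpa using ((hF.2 hN fun γ => Set.inter_subset_left) α hz).2⟩

theorem IsCosetSystem.exists_coherent_selection (hdir : Directed (· ≥ ·) J) {C : ι → Set V}
    (hC : IsCosetSystem J C) :
    ∃ y : ι → V, (∀ α, y α ∈ C α) ∧ ∀ α β, J β ≤ J α → y β - y α ∈ J α := by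
  obtain ⟨F, hFC, hF⟩ : ∃ F ≤ C, Minimal (IsCosetSystem J) F :=
    @zorn_le_nonempty₀ (ι → Set V)ᵒᵈ _ {F | IsCosetSystem J F}
      (fun c hc hchain F hF => ⟨fun α => ⋂ F ∈ c, F α,
        IsCosetSystem.iInter_of_isChain hc hchain.symm ⟨F, hF⟩,
        fun G hG α => Set.biInter_subset_of_mem hG⟩) C hC
  choose y hy using fun α => (hF.1.1 α).nonempty
  choose z₀ hz₀ using IsCosetSystem.exists_forall_sub_mem_of_minimal hdir hF
  refine ⟨y, fun α => hFC α (hy α), fun α β h => ?_⟩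
  simpa using (J α).sub_mem (hz₀ α _ (hF.1.2 h (hy β))) (hz₀ α _ (hy α))

end CosetSystems

section Closure

variable {ι L : Type*} [LieRing L] [LieAlgebra ℚ L] {I : ι → LieIdeal ℚ L}

theorem mem_encl_iff {S : Submodule ℚ L} {x : L} :
    x ∈ encl I S ↔ ∀ α, x ∈ S ⊔ (I α : Submodule ℚ L) := by
  refine forall_congr' fun α => ⟨fun ⟨_, hs, hxs⟩ => ?_, fun hx => ?_⟩
  · simpa using Submodule.add_mem_sup hs hxs
  · obtain ⟨s, hs, i, hi, rfl⟩ := Submodule.mem_sup.mp hx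
    exact ⟨s, hs, by simpa using hi⟩

theorem le_encl (S : Submodule ℚ L) : S ≤ encl I S :=
  fun _ hs => mem_encl_iff.mpr fun _ => Submodule.mem_sup_left hs

end Closure

/-- In a complete enriched Lie algebra, the sum of two closed
subspaces is closed. -/
theorem stmt2 {ι L : Type*} [LieRing L] [LieAlgebra ℚ L]
    (I : ι → LieIdeal ℚ L) (hE : IsEnriched I) (hC : IsCompleteWrt I)
    (S T : Submodule ℚ L) (hS : encl I S = S) (hT : encl I T = T) :
    encl I (S ⊔ T) = S ⊔ T := by
  refine le_antisymm (fun x hx => ?_) (le_encl _)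
  set J : ι → Submodule ℚ L := fun α => I α
  have hdir : Directed (· ≥ ·) J := fun α β => by
    obtain ⟨γ, hγ⟩ := hE.1 α β
    exact ⟨γ, (LieSubmodule.toSubmodule_le_toSubmodule _ _).mpr (hγ.trans inf_le_left),
      (LieSubmodule.toSubmodule_le_toSubmodule _ _).mpr (hγ.trans inf_le_right)⟩
  have : ∀ α, IsArtinian ℚ (L ⧸ J α) := fun α => by
    have : FiniteDimensional ℚ (L ⧸ J α) := hE.2.1 α
    infer_instance
  obtain ⟨y, hy, hcoh⟩ :=
    (isCosetSystem_sup_inter_setOf_sub_mem (mem_encl_iff.mp hx)).exists_coherent_selection hdir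
  obtain ⟨x', hx'⟩ :=
    hC y fun α β h => hcoh α β ((LieSubmodule.toSubmodule_le_toSubmodule _ _).mpr h)
  have hx'S : x' ∈ S := hS ▸ mem_encl_iff.mpr fun α => by
    simpa using Submodule.add_mem _ (hy α).1 (Submodule.mem_sup_right (hx' α))
  have hxT : x - x' ∈ T := hT ▸ mem_encl_iff.mpr fun α => by
    simpa using
      Submodule.sub_mem _ (Submodule.neg_mem _ (hy α).2) (Submodule.mem_sup_right (hx' α))
  simpa using Submodule.add_mem_sup hx'S hxT
end

section
/- Let L be a complete enriched Lie algebra with closed-lower-central series L^{(k)} defined as the closure of the k-th lower central series term L^k. Then [L^{(k)}, L^{(ℓ)}] ⊆ L^{(k+ℓ)} for all k, ℓ ≥ 1. -/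
/-!
The bracket of lower central series terms satisfies `[L^k, L^l] ⊆ L^{k+l}` by induction on `k`
and the Jacobi identity. Closures in an enriched Lie algebra are taken modulo ideals, so if
`x ≡ s` and `y ≡ t` modulo an ideal `J` then `[x, y] ≡ [s, t]` modulo `J`; hence brackets of
closures land in the closure of the bracket.
-/

section LowerCentralSeries

variable {L : Type*} [LieRing L] [LieAlgebra ℚ L] {A : Submodule ℚ L}

lemma lie_mem_lcsIn_succ {a y : L} {n : ℕ} (ha : a ∈ A) (hy : y ∈ lcsIn A n) :
    ⁅a, y⁆ ∈ lcsIn A (n + 1) :=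
  Submodule.subset_span ⟨a, ha, y, hy, rfl⟩

lemma lie_mem_lcsIn {k l : ℕ} {x y : L} (hx : x ∈ lcsIn A k) (hy : y ∈ lcsIn A l) :
    ⁅x, y⁆ ∈ lcsIn A (k + l + 1) := by
  induction k generalizing l x y with
  | zero => simpa only [zero_add] using lie_mem_lcsIn_succ (A := A) hx hy
  | succ k ih =>
    rw [Nat.add_right_comm k 1 l]
    rw [lcsIn] at hx
    induction hx using Submodule.span_induction with
    | mem z hz =>
      obtain ⟨a, ha, b, hb, rfl⟩ := hz
      rw [lie_lie]
      have h₁ : ⁅a, ⁅b, y⁆⁆ ∈ lcsIn A (k + l + 1 + 1) := lie_mem_lcsIn_succ ha (ih hb hy)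
      have h₂ : ⁅b, ⁅a, y⁆⁆ ∈ lcsIn A (k + (l + 1) + 1) := ih hb (lie_mem_lcsIn_succ ha hy)
      exact Submodule.sub_mem _ h₁ h₂
    | zero => simp only [zero_lie, Submodule.zero_mem]
    | add u v _ _ hu hv => simpa only [add_lie] using Submodule.add_mem _ hu hv
    | smul c u _ hu => simpa only [smul_lie] using Submodule.smul_mem _ c hu

end LowerCentralSeries

section Closure

variable {ι L : Type*} [LieRing L] [LieAlgebra ℚ L]

lemma LieIdeal.lie_sub_lie_mem (J : LieIdeal ℚ L) {x y s t : L}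
    (hx : x - s ∈ (J : Submodule ℚ L)) (hy : y - t ∈ (J : Submodule ℚ L)) :
    ⁅x, y⁆ - ⁅s, t⁆ ∈ (J : Submodule ℚ L) := by
  have hxy : ⁅x, y⁆ - ⁅s, t⁆ = -⁅y, x - s⁆ + ⁅s, y - t⁆ := by
    rw [lie_sub, lie_sub, ← lie_skew y x, ← lie_skew y s]
    abel
  rw [hxy]
  exact Submodule.add_mem _ (Submodule.neg_mem _ (J.lie_mem hx)) (J.lie_mem hy)

lemma lie_mem_encl (I : ι → LieIdeal ℚ L) {S T U : Submodule ℚ L}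
    (hST : ∀ s ∈ S, ∀ t ∈ T, ⁅s, t⁆ ∈ U) {x y : L} (hx : x ∈ encl I S) (hy : y ∈ encl I T) :
    ⁅x, y⁆ ∈ encl I U := by
  intro α
  obtain ⟨s, hs, hxs⟩ := hx α
  obtain ⟨t, ht, hyt⟩ := hy α
  exact ⟨⁅s, t⁆, hST s hs t ht, (I α).lie_sub_lie_mem hxs hyt⟩

end Closure

theorem stmt7_general {ι L : Type*} [LieRing L] [LieAlgebra ℚ L]
    (I : ι → LieIdeal ℚ L)
    (k l : ℕ) (x y : L)
    (hx : x ∈ encl I (lcsIn (⊤ : Submodule ℚ L) k))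
    (hy : y ∈ encl I (lcsIn (⊤ : Submodule ℚ L) l)) :
    ⁅x, y⁆ ∈ encl I (lcsIn (⊤ : Submodule ℚ L) (k + l + 1)) :=
  lie_mem_encl I (fun _ hs _ ht => lie_mem_lcsIn hs ht) hx hy

/-- In a complete enriched Lie algebra,
`[L^{(k)}, L^{(ℓ)}] ⊆ L^{(k+ℓ)}` where `L^{(k)}` is the closure of the `k`-th lower
central series term.  (Here `encl I (lcsIn ⊤ (k-1))` is `L^{(k)}`, `k ≥ 1`.) -/
theorem stmt7 {ι L : Type*} [LieRing L] [LieAlgebra ℚ L]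
    (I : ι → LieIdeal ℚ L) (hE : IsEnriched I) (hC : IsCompleteWrt I)
    (k l : ℕ) (x y : L)
    (hx : x ∈ encl I (lcsIn (⊤ : Submodule ℚ L) k))
    (hy : y ∈ encl I (lcsIn (⊤ : Submodule ℚ L) l)) :
    ⁅x, y⁆ ∈ encl I (lcsIn (⊤ : Submodule ℚ L) (k + l + 1)) :=
  stmt7_general I k l x y hx hy
end

section
/- Let L be a complete enriched Lie algebra. For each n and α, the surjection L → L_α/(L_α)^n factors through L/L^n, and the resulting maps exhibit the identity of L as a composite L → lim_n L/L^n → L. Hence L is a retract of its classical pronilpotent completion lim_n L/L^n. -/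
section LimPre

variable {M : Type*} [AddCommGroup M] [Module ℚ M]

/-- The inverse limit `lim_a M ⧸ J a`, realized as the submodule of coherent families in
the product of the quotients (the transition maps being the canonical projections). -/
def limOf {κ : Type*} (J : κ → Submodule ℚ M) : Submodule ℚ (∀ a, M ⧸ J a) where
  carrier := {x | ∀ a b (h : J b ≤ J a),
    Submodule.mapQ (J b) (J a) LinearMap.id
      (by simpa [Submodule.comap_id] using h) (x b) = x a}
  add_mem' := by
    intro u v hu hv a b h
    simp only [Pi.add_apply, map_add, hu a b h, hv a b h]
  zero_mem' := by
    intro a b h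
    simp
  smul_mem' := by
    intro c u hu a b h
    simp only [Pi.smul_apply, map_smul, hu a b h]

/-- The canonical map `M → lim_a M ⧸ J a`. -/
def limProj {κ : Type*} (J : κ → Submodule ℚ M) : M →ₗ[ℚ] ↥(limOf J) :=
  LinearMap.codRestrict (limOf J) (LinearMap.pi fun a => (J a).mkQ)
    (by
      intro x a b h
      simp [Submodule.mapQ_apply])

end LimPre

section InverseLimit

variable {M : Type*} [AddCommGroup M] [Module ℚ M] {κ ι : Type*}
  {J : κ → Submodule ℚ M} {K : ι → Submodule ℚ M}

theorem factor_apply_eq_of_mem_limOf (hJ : Directed (· ≥ ·) J)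
    {u : ∀ a, M ⧸ J a} (hu : u ∈ limOf J) {N : Submodule ℚ M} {a b : κ}
    (ha : J a ≤ N) (hb : J b ≤ N) :
    Submodule.factor ha (u a) = Submodule.factor hb (u b) := by
  obtain ⟨c, hca, hcb⟩ := hJ a b
  rw [← hu a c hca, ← hu b c hcb, Submodule.factor_comp_apply, Submodule.factor_comp_apply]

noncomputable def limMap (hJ : Directed (· ≥ ·) J) (hJK : ∀ α, ∃ a, J a ≤ K α) :
    limOf J →ₗ[ℚ] limOf K :=
  LinearMap.codRestrict (limOf K)
    (LinearMap.pi fun α => Submodule.factor (hJK α).choose_spec ∘ₗ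
      LinearMap.proj (hJK α).choose ∘ₗ (limOf J).subtype)
    fun u α β h => (Submodule.factor_comp_apply (hJK β).choose_spec h _).trans
      (factor_apply_eq_of_mem_limOf hJ u.2 _ (hJK α).choose_spec)

theorem limMap_limProj (hJ : Directed (· ≥ ·) J) (hJK : ∀ α, ∃ a, J a ≤ K α) (x : M) :
    limMap hJ hJK (limProj J x) = limProj K x :=
  rfl

theorem limProj_injective (hJ : ⨅ a, J a = ⊥) :
    Function.Injective (limProj J) := by
  refine (injective_iff_map_eq_zero _).2 fun x hx => ?_
  have hmem : ∀ a, x ∈ J a := fun a =>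
    (Submodule.Quotient.mk_eq_zero _).1 (congrFun (congrArg Subtype.val hx) a)
  simpa [hJ] using Submodule.mem_iInf J |>.2 hmem

theorem limProj_surjective
    (hJ : ∀ y : κ → M, (∀ a b, J b ≤ J a → y b - y a ∈ J a) → ∃ x, ∀ a, x - y a ∈ J a) :
    Function.Surjective (limProj J) := by
  intro u
  choose y hy using fun a => Submodule.Quotient.mk_surjective _ (u.1 a)
  obtain ⟨x, hx⟩ := hJ y fun a b h => by
    rw [← Submodule.Quotient.eq, hy, ← u.2 a b h, ← hy b]
    rfl
  refine ⟨x, Subtype.ext <| funext fun a => ?_⟩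
  rw [← hy a]
  exact (Submodule.Quotient.eq _).2 (hx a)

theorem exists_leftInverse_limProj (hJ : Directed (· ≥ ·) J) (hJK : ∀ α, ∃ a, J a ≤ K α)
    (hK : ⨅ α, K α = ⊥)
    (hKc : ∀ y : ι → M, (∀ α β, K β ≤ K α → y β - y α ∈ K α) → ∃ x, ∀ α, x - y α ∈ K α) :
    ∃ ψ : limOf J →ₗ[ℚ] M, ∀ x, ψ (limProj J x) = x := by
  let e := LinearEquiv.ofBijective (limProj K) ⟨limProj_injective hK, limProj_surjective hKc⟩
  refine ⟨e.symm.toLinearMap ∘ₗ limMap hJ hJK, fun x => ?_⟩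
  simp only [LinearMap.comp_apply, limMap_limProj, LinearEquiv.coe_coe]
  exact e.symm_apply_apply x

end InverseLimit

open LieModule in
theorem LieIdeal.exists_lowerCentralSeries_le_of_isNilpotent_quotient {R L : Type*} [CommRing R]
    [LieRing L] [LieAlgebra R L] (I : LieIdeal R L) [LieRing.IsNilpotent (L ⧸ I)] :
    ∃ k, lowerCentralSeries R L L k ≤ I := by
  obtain ⟨k, hk⟩ := IsNilpotent.nilpotent R (L ⧸ I) (L ⧸ I)
  have hk' : lowerCentralSeries R L (L ⧸ I) k = ⊥ := by
    rw [← LieSubmodule.toSubmodule_inj, coe_lowerCentralSeries_ideal_quot_eq, hk]; rfl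
  refine ⟨k, (LieSubmodule.Quotient.map_mk'_eq_bot_le _ _).1 (le_bot_iff.1 ?_)⟩
  exact hk' ▸ LieModule.map_lowerCentralSeries_le k (LieSubmodule.Quotient.mk' I)

section

variable {L : Type*} [LieRing L] [LieAlgebra ℚ L]

theorem lcsIn_top_eq_lowerCentralSeries (n : ℕ) :
    lcsIn (⊤ : Submodule ℚ L) n = (LieModule.lowerCentralSeries ℚ L L n).toSubmodule := by
  induction n with
  | zero => rfl
  | succ n ih =>
    rw [LieModule.lowerCentralSeries_succ, LieSubmodule.lieIdeal_oper_eq_linear_span']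
    simp only [lcsIn, ih]
    rfl

theorem antitone_lcsIn_top : Antitone (lcsIn (⊤ : Submodule ℚ L)) := fun m n h => by
  rw [lcsIn_top_eq_lowerCentralSeries, lcsIn_top_eq_lowerCentralSeries]
  exact LieModule.antitone_lowerCentralSeries ℚ L L h

end

/-- A complete enriched Lie algebra `L` is a retract of its classical
pronilpotent completion `lim_n L/L^n`: the canonical map `φ : L → lim_n L/L^n` admits a
left inverse `ψ` with `ψ ∘ φ = id`.  (Here `lcsIn ⊤ (n-1)` is `L^n`.) -/
theorem stmt9 {ι L : Type*} [LieRing L] [LieAlgebra ℚ L]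
    (I : ι → LieIdeal ℚ L) (hE : IsEnriched I) (hC : IsCompleteWrt I) :
    ∃ ψ : ↥(limOf fun n : ℕ => lcsIn (⊤ : Submodule ℚ L) n) →ₗ[ℚ] L,
      ∀ x : L, ψ (limProj (fun n : ℕ => lcsIn (⊤ : Submodule ℚ L) n) x) = x := by
  obtain ⟨-, -, hnil, hbot⟩ := hE
  have hcofinal : ∀ α, ∃ n, lcsIn (⊤ : Submodule ℚ L) n ≤ I α := fun α => by
    have := hnil α
    obtain ⟨n, hn⟩ := (I α).exists_lowerCentralSeries_le_of_isNilpotent_quotient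
    exact ⟨n, (lcsIn_top_eq_lowerCentralSeries n).trans_le hn⟩
  have hsep : ⨅ α, (I α : Submodule ℚ L) = ⊥ := by
    simpa [← LieSubmodule.iInf_toSubmodule] using congrArg LieSubmodule.toSubmodule hbot
  exact exists_leftInverse_limProj antitone_lcsIn_top.directed_ge hcofinal hsep hC
end
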